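/- Let 𝒜 be a unital C*-algebra, let a, b ∈ 𝒜 be positive elements, and let r ≥ 1 be a real number. Then ‖a b‖^r ≤ ‖a^r b^r‖. -/

import Mathlib

/-!
With `x = a ^ r` and `y = b ^ r` this is Cordes' inequality `‖x ^ s * y ^ s‖ ≤ ‖x * y‖ ^ s` for
`s = 1 / r`. When `y` is invertible, `‖x * y‖ ≤ 1` says exactly that `x ^ 2 ≤ y ^ (-2)`, and the
Löwner–Heinz inequality (operator monotonicity of `t ↦ t ^ s`) turns this into
`x ^ (2 * s) ≤ y ^ (-2 * s)`, i.e. `‖x ^ s * y ^ s‖ ≤ 1`. Homogeneity removes the normalisation,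
and replacing `b` by `b + ε` with `ε ↓ 0` removes invertibility, by continuity of the continuous
functional calculus.
-/

open scoped NNReal
open Filter Topology CFC

section

variable {A : Type*} [CStarAlgebra A] [PartialOrder A] [StarOrderedRing A]

lemma CFC.norm_sqrt_mul_sqrt_le_one_iff {x y : A} (hx : 0 ≤ x) (hy : IsStrictlyPositive y) :
    ‖sqrt x * sqrt y‖ ≤ 1 ↔ x ≤ y ^ (-1 : ℝ) := by
  rw [le_iff_norm_sqrt_mul_rpow x (y ^ (-1 : ℝ)) hx (hy.rpow _ _),
    rpow_rpow y _ _ (by norm_num), sqrt_eq_rpow (a := y)]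
  norm_num

lemma CFC.sqrt_rpow_two_mul (a : A) {r : ℝ} (hr : 0 ≤ r) (ha : 0 ≤ a := by cfc_tac) :
    sqrt (a ^ (2 * r)) = a ^ r := by
  rw [sqrt_eq_rpow, rpow_rpow_of_exponent_nonneg a _ _ (by positivity) (by norm_num)]
  ring_nf

lemma CFC.smul_rpow (t : ℝ≥0) (a : A) {r : ℝ} (hr : 0 ≤ r) (ha : 0 ≤ a := by cfc_tac) :
    (t • a) ^ r = t ^ r • a ^ r := by
  rw [rpow_def, rpow_def, ← cfc_comp_smul t _ a, ← cfc_smul (t ^ r) _ a]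
  exact cfc_congr fun x _ ↦ by simp [NNReal.mul_rpow]

lemma CFC.tendsto_add_algebraMap_rpow (b : A) {r : ℝ} (hr : 0 ≤ r) (hb : 0 ≤ b := by cfc_tac) :
    Tendsto (fun ε : ℝ≥0 ↦ (b + algebraMap ℝ≥0 A ε) ^ r) (𝓝 0) (𝓝 (b ^ r)) := by
  have hcont : Continuous (fun ε : ℝ≥0 ↦ (b + algebraMap ℝ≥0 A ε) ^ r) :=
    Continuous.cfc_nnreal_of_mem_nhdsSet _ (s := Set.univ) univ_mem (by fun_prop)
      (fun ε ↦ add_nonneg hb (algebraMap_nonneg A ε.2)) (NNReal.continuous_rpow_const hr).continuousOn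
  simpa using hcont.tendsto 0

lemma eq_zero_of_rpow_mul_rpow_eq_zero {a b : A} (ha : 0 ≤ a) (hb : IsStrictlyPositive b)
    {r : ℝ} (hr : 0 < r) (h : a ^ r * b ^ r = 0) : a = 0 := by
  rw [(hb.rpow b r).isUnit.mul_left_eq_zero] at h
  rw [← rpow_one a, ← mul_inv_cancel₀ hr.ne', ← rpow_rpow_of_exponent_nonneg a _ _ hr.le
    (by positivity), h]
  exact zero_rpow (inv_ne_zero hr.ne')

lemma norm_mul_le_one_of_norm_rpow_mul_rpow_le_one {a b : A} (ha : 0 ≤ a)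
    (hb : IsStrictlyPositive b) {r : ℝ} (hr : 1 ≤ r) (h : ‖a ^ r * b ^ r‖ ≤ 1) :
    ‖a * b‖ ≤ 1 := by
  have hr0 : 0 < r := by linarith
  have hcontraction_iff (p : ℝ) (hp : 0 ≤ p) :
      ‖a ^ p * b ^ p‖ ≤ 1 ↔ a ^ (2 * p) ≤ (b ^ (2 * p)) ^ (-1 : ℝ) := by
    rw [← norm_sqrt_mul_sqrt_le_one_iff rpow_nonneg (hb.rpow _ _), sqrt_rpow_two_mul a hp,
      sqrt_rpow_two_mul b hp]
  have hheinz : (a ^ (2 * r)) ^ r⁻¹ ≤ ((b ^ (2 * r)) ^ (-1 : ℝ)) ^ r⁻¹ :=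
    rpow_le_rpow ⟨by positivity, inv_le_one_of_one_le₀ hr⟩ ((hcontraction_iff r hr0.le).mp h)
  rw [rpow_rpow_of_exponent_nonneg a _ _ (by positivity) (by positivity),
    rpow_rpow _ _ _ (by norm_num) (hb.rpow _ _), rpow_rpow b _ _ (by positivity)] at hheinz
  have hsq : a ^ (2 * 1 : ℝ) ≤ (b ^ (2 * 1 : ℝ)) ^ (-1 : ℝ) := by
    rw [rpow_rpow b _ _ (by norm_num)]
    convert hheinz using 2 <;> field_simp
  simpa only [rpow_one a, rpow_one b hb.nonneg] using (hcontraction_iff 1 zero_le_one).mpr hsq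

lemma norm_mul_rpow_le_norm_rpow_mul_rpow_of_isStrictlyPositive {a b : A} (ha : 0 ≤ a)
    (hb : IsStrictlyPositive b) {r : ℝ} (hr : 1 ≤ r) :
    ‖a * b‖ ^ r ≤ ‖a ^ r * b ^ r‖ := by
  have hr0 : 0 < r := by linarith
  rcases (norm_nonneg (a ^ r * b ^ r)).eq_or_lt with hc | hc
  · rw [eq_comm, norm_eq_zero] at hc
    simp [eq_zero_of_rpow_mul_rpow_eq_zero ha hb hr0 hc, Real.zero_rpow hr0.ne']
  set c := ‖a ^ r * b ^ r‖
  set t : ℝ≥0 := ⟨c ^ (-r⁻¹), by positivity⟩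
  have htpos : (0 : ℝ) < t := Real.rpow_pos_of_pos hc _
  have htr : (t : ℝ) ^ r = c⁻¹ := by
    rw [show (t : ℝ) = c ^ (-r⁻¹) from rfl, ← Real.rpow_mul hc.le, neg_mul,
      inv_mul_cancel₀ hr0.ne', Real.rpow_neg_one]
  have hscaled : ‖(t • a) ^ r * b ^ r‖ ≤ 1 := by
    rw [smul_rpow t a hr0.le, NNReal.smul_def, smul_mul_assoc, norm_smul, NNReal.coe_rpow,
      Real.norm_of_nonneg (by positivity), htr, inv_mul_cancel₀ hc.ne']
  have hab : (t : ℝ) * ‖a * b‖ ≤ 1 := by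
    simpa [NNReal.smul_def, smul_mul_assoc, norm_smul] using
      norm_mul_le_one_of_norm_rpow_mul_rpow_le_one (smul_nonneg t.2 ha) hb hr hscaled
  calc ‖a * b‖ ^ r ≤ (1 / (t : ℝ)) ^ r :=
        Real.rpow_le_rpow (norm_nonneg _) ((le_div_iff₀' htpos).mpr hab) hr0.le
    _ = c := by rw [one_div, Real.inv_rpow htpos.le, htr, inv_inv]

end

theorem alt_norm_inequality_cstar {A : Type*} [CStarAlgebra A]
    [PartialOrder A] [StarOrderedRing A]
    (a b : A) (ha : 0 ≤ a) (hb : 0 ≤ b) (r : ℝ) (hr : 1 ≤ r) :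
    ‖a * b‖ ^ r ≤ ‖CFC.rpow a r * CFC.rpow b r‖ := by
  have hr0 : 0 < r := by linarith
  set bε : ℝ≥0 → A := fun ε ↦ b + algebraMap ℝ≥0 A ε
  have hlhs : Tendsto (fun ε ↦ ‖a * bε ε‖ ^ r) (𝓝[>] 0) (𝓝 (‖a * b‖ ^ r)) := by
    have hcont : Continuous (fun ε ↦ ‖a * bε ε‖ ^ r) :=
      (by fun_prop : Continuous (fun ε ↦ ‖a * bε ε‖)).rpow_const fun _ ↦ .inr hr0.le
    simpa [bε] using hcont.continuousWithinAt.tendsto (s := Set.Ioi 0) (x := 0)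
  have hrhs : Tendsto (fun ε ↦ ‖a ^ r * bε ε ^ r‖) (𝓝[>] 0) (𝓝 ‖a ^ r * b ^ r‖) :=
    ((tendsto_add_algebraMap_rpow b hr0.le).const_mul (a ^ r)).norm.mono_left nhdsWithin_le_nhds
  refine le_of_tendsto_of_tendsto hlhs hrhs (eventually_nhdsWithin_of_forall fun ε hε ↦ ?_)
  exact norm_mul_rpow_le_norm_rpow_mul_rpow_of_isStrictlyPositive ha
    ((isStrictlyPositive_algebraMap hε).nonneg_add hb) hr
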